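/- Let G be a finite simple undirected connected graph with at least two vertices and positive vertex weights, with bottleneck decomposition {(B_1,C_1),…,(B_k,C_k)} and α_i = w(C_i)/w(B_i). Define prices p(u) = α_i·w(u) for u ∈ B_i and p(u) = w(u) for u ∈ C_i (these agree when α_k = 1 and B_k = C_k). Then for every BD-mechanism allocation X: (i) Σ_{v∈Γ(u)} x_{uv} = 1 for every u ∈ V (market clearance); (ii) Σ_{v∈Γ(u)} x_{vu}·p(v) ≤ p(u) for every u ∈ V (budget constraint); (iii) for every u ∈ V and every family (y_v)_{v∈Γ(u)} with y_v ≥ 0 and Σ_{v∈Γ(u)} y_v·p(v) ≤ p(u), one has Σ_{v∈Γ(u)} y_v·w(v) ≤ Σ_{v∈Γ(u)} x_{vu}·w(v) (individual optimality); hence (p,X) is a market equilibrium. Moreover U_u(X) = α_i·w(u) for every u ∈ B_i and U_u(X) = w(u)/α_i for every u ∈ C_i. -/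

import Mathlib

open Finset

/-- The total weight of a finite set of vertices. -/
def wsum {V : Type*} (w : V → ℝ) (S : Finset V) : ℝ := ∑ v ∈ S, w v

/-- The neighborhood of `S` inside the induced subgraph on `A`: all vertices of `A` adjacent
to at least one vertex of `S`. -/
def nbhdIn {V : Type*} [DecidableEq V] (G : SimpleGraph V) [DecidableRel G.Adj]
    (A S : Finset V) : Finset V :=
  A.filter fun v => ∃ u ∈ S, G.Adj u v

/-- The α-ratio of `S` computed inside the induced subgraph on `A`. -/
noncomputable def alphaIn {V : Type*} [DecidableEq V] (G : SimpleGraph V)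
    [DecidableRel G.Adj] (w : V → ℝ) (A S : Finset V) : ℝ :=
  wsum w (nbhdIn G A S) / wsum w S

/-- `B` is the maximal bottleneck of the induced subgraph `G[A]`: it is a nonempty subset of
`A` of minimal α-ratio (within `G[A]`) and every strictly larger subset of `A` has strictly
larger α-ratio. -/
def IsMaxBottleneckIn {V : Type*} [DecidableEq V] (G : SimpleGraph V) [DecidableRel G.Adj]
    (w : V → ℝ) (A B : Finset V) : Prop :=
  B.Nonempty ∧ B ⊆ A ∧
    (∀ S : Finset V, S.Nonempty → S ⊆ A → alphaIn G w A B ≤ alphaIn G w A S) ∧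
    ∀ B' : Finset V, B ⊂ B' → B' ⊆ A → alphaIn G w A B < alphaIn G w A B'


/-- `x` is an allocation on `G`: nonnegative, supported on edges, and each vertex
distributes its whole (unit fraction of) resource: `Σ_{v∈Γ(u)} x_{uv} = 1`. -/
def IsAllocation {V : Type*} [Fintype V] [DecidableEq V] (G : SimpleGraph V)
    [DecidableRel G.Adj] (x : V → V → ℝ) : Prop :=
  (∀ u v, 0 ≤ x u v) ∧ (∀ u v, ¬ G.Adj u v → x u v = 0) ∧
    ∀ u : V, ∑ v ∈ G.neighborFinset u, x u v = 1

/-- The utility `U_u(X) = Σ_{v∈Γ(u)} x_{vu}·w(v)` of agent `u` under allocation `x`. -/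
def util {V : Type*} [Fintype V] [DecidableEq V] (G : SimpleGraph V) [DecidableRel G.Adj]
    (w : V → ℝ) (x : V → V → ℝ) (u : V) : ℝ :=
  ∑ v ∈ G.neighborFinset u, x v u * w v

/-- `x` is a BD-mechanism allocation for the bottleneck decomposition `(B i, C i)` with
α-ratios `alpha i`: it is an allocation, exchange happens only along edges between `B i`
and `C i` of the same pair, and `x_{vu}·w(v) = α_i·x_{uv}·w(u)` for every edge `(u,v)`
with `u ∈ B i`, `v ∈ C i`. -/
def IsBDAllocation {V : Type*} [Fintype V] [DecidableEq V] (G : SimpleGraph V)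
    [DecidableRel G.Adj] (w : V → ℝ) (k : ℕ) (B C : Fin k → Finset V)
    (x : V → V → ℝ) : Prop :=
  IsAllocation G x ∧
    (∀ u v : V, x u v ≠ 0 → ∃ i : Fin k, (u ∈ B i ∧ v ∈ C i) ∨ (u ∈ C i ∧ v ∈ B i)) ∧
    ∀ i : Fin k, ∀ u ∈ B i, ∀ v ∈ C i, G.Adj u v →
      x v u * w v = (wsum w (C i) / wsum w (B i)) * (x u v * w u)

/-!
Whenever `x` trades along an edge `uv`, the defining relation of a BD-mechanism allocation says
exactly `x_{vu} p(v) = x_{uv} p(u)`; summing over the neighbours of `u` shows that every budget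
binds. Prices equal weights scaled by `α_i` on `B_i` and by `1` on `C_i`. A vertex of `B_i` only
has neighbours whose price equals their weight, while a vertex of `C_i` only has neighbours with
`p(v) ≥ α_i w(v)`, because `α_i ≤ 1` and the α-ratios increase along the decomposition. So the
allocation buys only from neighbours with the best weight-per-price ratio, which gives both the
utility formulas and individual optimality. The α-ratios increase because `B_i` is a bottleneck
of `G_i`: its ratio is at most that of `B_i ∪ B_{i+1}`, a mediant of `α_i` and `α_{i+1}`.
-/

lemma wsum_pos {V : Type*} {w : V → ℝ} (hw : ∀ v, 0 < w v) {S : Finset V} (hS : S.Nonempty) :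
    0 < wsum w S :=
  sum_pos (fun v _ => hw v) hS

lemma wsum_le_wsum {V : Type*} {w : V → ℝ} (hw : ∀ v, 0 ≤ w v) {S T : Finset V} (h : S ⊆ T) :
    wsum w S ≤ wsum w T :=
  sum_le_sum_of_subset_of_nonneg h fun v _ _ => hw v

lemma wsum_union {V : Type*} [DecidableEq V] {w : V → ℝ} {S T : Finset V} (h : Disjoint S T) :
    wsum w (S ∪ T) = wsum w S + wsum w T :=
  sum_union h

lemma div_le_div_of_div_le_mediant {a b c d : ℝ} (hb : 0 < b) (hd : 0 < d)
    (h : a / b ≤ (a + c) / (b + d)) : a / b ≤ c / d := by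
  rw [div_le_div_iff₀ hb (by positivity)] at h
  rw [div_le_div_iff₀ hb hd]
  linarith

lemma sum_mul_le_mul_of_le_mul {ι : Type*} {s : Finset ι} {y w p : ι → ℝ} {β P : ℝ}
    (hβ : 0 ≤ β) (hy : ∀ v ∈ s, 0 ≤ y v) (hwp : ∀ v ∈ s, w v ≤ β * p v)
    (hP : ∑ v ∈ s, y v * p v ≤ P) : ∑ v ∈ s, y v * w v ≤ β * P :=
  calc ∑ v ∈ s, y v * w v ≤ ∑ v ∈ s, y v * (β * p v) :=
        sum_le_sum fun v hv => mul_le_mul_of_nonneg_left (hwp v hv) (hy v hv)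
    _ = β * ∑ v ∈ s, y v * p v := by rw [mul_sum]; exact sum_congr rfl fun v _ => by ring
    _ ≤ β * P := mul_le_mul_of_nonneg_left hP hβ

section Bottleneck

variable {V : Type*} [DecidableEq V] {G : SimpleGraph V} [DecidableRel G.Adj] {w : V → ℝ}
  {A B B' : Finset V}

lemma mem_nbhdIn_of_adj {u v : V} (hu : u ∈ B) (hv : v ∈ A) (huv : G.Adj u v) :
    v ∈ nbhdIn G A B :=
  mem_filter.mpr ⟨hv, u, hu, huv⟩

lemma not_adj_of_mem_sdiff {u v : V} (hu : u ∈ B) (hv : v ∈ A \ (B ∪ nbhdIn G A B)) :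
    ¬ G.Adj u v := fun huv =>
  (mem_sdiff.mp hv).2 (mem_union_right _ (mem_nbhdIn_of_adj hu (mem_sdiff.mp hv).1 huv))

lemma nbhdIn_union_subset (hB' : B' ⊆ A \ (B ∪ nbhdIn G A B)) :
    nbhdIn G A (B ∪ B') ⊆ nbhdIn G A B ∪ nbhdIn G (A \ (B ∪ nbhdIn G A B)) B' := by
  intro v hv
  obtain ⟨hvA, u, hu, huv⟩ := mem_filter.mp hv
  rcases mem_union.mp hu with hu | hu
  · exact mem_union_left _ (mem_nbhdIn_of_adj hu hvA huv)
  by_cases hv' : v ∈ B ∪ nbhdIn G A B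
  · rcases mem_union.mp hv' with hvB | hvC
    · exact absurd huv.symm (not_adj_of_mem_sdiff hvB (hB' hu))
    · exact mem_union_left _ hvC
  · exact mem_union_right _ (mem_nbhdIn_of_adj hu (mem_sdiff.mpr ⟨hvA, hv'⟩) huv)

lemma IsMaxBottleneckIn.alphaIn_le_one (hw : ∀ v, 0 ≤ w v) (hB : IsMaxBottleneckIn G w A B) :
    alphaIn G w A B ≤ 1 := by
  obtain ⟨⟨b, hb⟩, hBA, hmin, -⟩ := hB
  calc alphaIn G w A B ≤ alphaIn G w A A := hmin A ⟨b, hBA hb⟩ subset_rfl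
    _ ≤ 1 := div_le_one_of_le₀ (wsum_le_wsum hw (filter_subset _ _)) (sum_nonneg fun v _ => hw v)

lemma IsMaxBottleneckIn.alphaIn_le_alphaIn_sdiff (hw : ∀ v, 0 < w v)
    (hB : IsMaxBottleneckIn G w A B) (hne : B'.Nonempty) (hB' : B' ⊆ A \ (B ∪ nbhdIn G A B)) :
    alphaIn G w A B ≤ alphaIn G w (A \ (B ∪ nbhdIn G A B)) B' := by
  have hdisjB : Disjoint B B' :=
    (disjoint_sdiff.mono_left subset_union_left).mono_right hB'
  have hdisjC : Disjoint (nbhdIn G A B) (nbhdIn G (A \ (B ∪ nbhdIn G A B)) B') :=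
    (disjoint_sdiff.mono_left subset_union_right).mono_right (filter_subset _ _)
  have hmin := hB.2.2.1 (B ∪ B') (hB.1.mono subset_union_left)
    (union_subset hB.2.1 (hB'.trans sdiff_subset))
  refine div_le_div_of_div_le_mediant (wsum_pos hw hB.1) (wsum_pos hw hne) (hmin.trans ?_)
  rw [alphaIn, wsum_union hdisjB, ← wsum_union hdisjC]
  exact div_le_div_of_nonneg_right (wsum_le_wsum (fun v => (hw v).le) (nbhdIn_union_subset hB'))
    (add_nonneg (wsum_pos hw hB.1).le (wsum_pos hw hne).le)

end Bottleneck

section Peeling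

variable {V : Type*} [DecidableEq V] {k : ℕ} {P : Fin k → Finset V}
  {Vs : Fin (k + 1) → Finset V}

lemma antitone_of_peel (hsucc : ∀ i, Vs i.succ = Vs i.castSucc \ P i) : Antitone Vs :=
  Fin.antitone_iff_succ_le.mpr fun i => by rw [hsucc i]; exact sdiff_subset

lemma subset_succ_of_lt (hsucc : ∀ i, Vs i.succ = Vs i.castSucc \ P i)
    (hP : ∀ i, P i ⊆ Vs i.castSucc) {i j : Fin k} (hij : i < j) : P j ⊆ Vs i.succ :=
  (hP j).trans (antitone_of_peel hsucc (Fin.succ_le_castSucc_iff.mpr hij))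

lemma eq_of_mem_of_mem_peel (hsucc : ∀ i, Vs i.succ = Vs i.castSucc \ P i)
    (hP : ∀ i, P i ⊆ Vs i.castSucc) {i j : Fin k} {v : V} (hi : v ∈ P i) (hj : v ∈ P j) :
    i = j := by
  have not_mem_of_lt : ∀ {i j : Fin k}, i < j → v ∈ P i → v ∉ P j := fun hij hi hj => by
    have hv := subset_succ_of_lt hsucc hP hij hj
    rw [hsucc] at hv
    exact (mem_sdiff.mp hv).2 hi
  rcases lt_trichotomy i j with hij | hij | hij
  exacts [absurd hj (not_mem_of_lt hij hi), hij, absurd hi (not_mem_of_lt hij hj)]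

lemma exists_mem_peel [Fintype V] (h0 : Vs 0 = univ)
    (hsucc : ∀ i, Vs i.succ = Vs i.castSucc \ P i) (hlast : Vs (Fin.last k) = ∅) (v : V) :
    ∃ i, v ∈ P i := by
  by_contra! h
  have hv : ∀ i, v ∈ Vs i := by
    intro i
    induction i using Fin.induction with
    | zero => simp [h0]
    | succ i ih => rw [hsucc i]; exact mem_sdiff.mpr ⟨ih, h i⟩
  simpa [hlast] using hv (Fin.last k)

end Peeling

structure IsBottleneckDecomposition {V : Type*} [Fintype V] [DecidableEq V]
    (G : SimpleGraph V) [DecidableRel G.Adj] (w : V → ℝ) (k : ℕ) (B C : Fin k → Finset V)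
    (Vs : Fin (k + 1) → Finset V) : Prop where
  first : Vs 0 = univ
  succ : ∀ i, Vs i.succ = Vs i.castSucc \ (B i ∪ C i)
  last : Vs (Fin.last k) = ∅
  isMaxBottleneckIn : ∀ i, IsMaxBottleneckIn G w (Vs i.castSucc) (B i)
  nbhdIn_eq : ∀ i, C i = nbhdIn G (Vs i.castSucc) (B i)

structure IsBDPrice {V : Type*} {k : ℕ} (w : V → ℝ) (B C : Fin k → Finset V) (p : V → ℝ) :
    Prop where
  eq_of_mem_B : ∀ i, ∀ u ∈ B i, p u = wsum w (C i) / wsum w (B i) * w u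
  eq_of_mem_C : ∀ i, ∀ u ∈ C i, p u = w u

lemma IsBDPrice.ratio_eq_one {V : Type*} {k : ℕ} {w : V → ℝ} {B C : Fin k → Finset V}
    {p : V → ℝ} {i : Fin k} {u : V} (hw : ∀ v, 0 < w v) (hp : IsBDPrice w B C p) (huB : u ∈ B i)
    (huC : u ∈ C i) : wsum w (C i) / wsum w (B i) = 1 :=
  mul_right_cancel₀ (hw u).ne' <|
    ((hp.eq_of_mem_B i u huB).symm.trans (hp.eq_of_mem_C i u huC)).trans (one_mul _).symm

section Market

variable {V : Type*} [Fintype V] [DecidableEq V] {G : SimpleGraph V} [DecidableRel G.Adj]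
  {w : V → ℝ} {k : ℕ} {B C : Fin k → Finset V} {Vs : Fin (k + 1) → Finset V} {p : V → ℝ}
  {x : V → V → ℝ} {i : Fin k} {u v : V}

lemma IsBDAllocation.price_balance (hx : IsBDAllocation G w k B C x) (hp : IsBDPrice w B C p)
    (huv : G.Adj u v) : x v u * p v = x u v * p u := by
  obtain ⟨-, hsupp, hrel⟩ := hx
  by_cases h0 : x u v = 0 ∧ x v u = 0
  · simp [h0.1, h0.2]
  obtain ⟨i, ⟨hu, hv⟩ | ⟨hu, hv⟩⟩ : ∃ i, (u ∈ B i ∧ v ∈ C i) ∨ (u ∈ C i ∧ v ∈ B i) := by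
    rcases not_and_or.mp h0 with h | h
    · exact hsupp u v h
    · obtain ⟨i, hi⟩ := hsupp v u h
      exact ⟨i, hi.symm.imp And.symm And.symm⟩
  · rw [hp.eq_of_mem_C i v hv, hp.eq_of_mem_B i u hu, hrel i u hu v hv huv]; ring
  · rw [hp.eq_of_mem_B i v hv, hp.eq_of_mem_C i u hu, hrel i v hv u hu huv.symm]; ring

lemma IsBDAllocation.sum_mul_price_eq (hx : IsBDAllocation G w k B C x) (hp : IsBDPrice w B C p)
    (u : V) : ∑ v ∈ G.neighborFinset u, x v u * p v = p u := by
  rw [sum_congr rfl fun v hv => hx.price_balance hp ((G.mem_neighborFinset u v).mp hv),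
    ← sum_mul, hx.1.2.2 u, one_mul]

namespace IsBottleneckDecomposition

lemma pair_subset (hD : IsBottleneckDecomposition G w k B C Vs) (i : Fin k) :
    B i ∪ C i ⊆ Vs i.castSucc :=
  union_subset (hD.isMaxBottleneckIn i).2.1 (by rw [hD.nbhdIn_eq i]; exact filter_subset _ _)

lemma eq_of_mem_pair (hD : IsBottleneckDecomposition G w k B C Vs) {j : Fin k}
    (hi : v ∈ B i ∪ C i) (hj : v ∈ B j ∪ C j) : i = j :=
  eq_of_mem_of_mem_peel hD.succ hD.pair_subset hi hj

lemma exists_mem_pair (hD : IsBottleneckDecomposition G w k B C Vs) (v : V) :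
    ∃ i, v ∈ B i ∪ C i :=
  exists_mem_peel hD.first hD.succ hD.last v

lemma ratio_eq_alphaIn (hD : IsBottleneckDecomposition G w k B C Vs) (i : Fin k) :
    wsum w (C i) / wsum w (B i) = alphaIn G w (Vs i.castSucc) (B i) := by
  rw [hD.nbhdIn_eq i]; rfl

lemma le_of_mem_B_of_adj (hD : IsBottleneckDecomposition G w k B C Vs) {j : Fin k}
    (hu : u ∈ B i) (hv : v ∈ B j ∪ C j) (huv : G.Adj u v) : j ≤ i := by
  by_contra! hij
  have hv' := subset_succ_of_lt hD.succ hD.pair_subset hij hv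
  rw [hD.succ i, hD.nbhdIn_eq i] at hv'
  exact not_adj_of_mem_sdiff hu hv' huv

lemma ratio_le_one (hD : IsBottleneckDecomposition G w k B C Vs) (hw : ∀ v, 0 ≤ w v)
    (i : Fin k) : wsum w (C i) / wsum w (B i) ≤ 1 := by
  rw [hD.ratio_eq_alphaIn]
  exact (hD.isMaxBottleneckIn i).alphaIn_le_one hw

lemma ratio_monotone (hD : IsBottleneckDecomposition G w k B C Vs) (hw : ∀ v, 0 < w v) :
    Monotone fun i => wsum w (C i) / wsum w (B i) := by
  cases k with
  | zero => exact fun i => i.elim0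
  | succ n =>
    refine Fin.monotone_iff_le_succ.mpr fun i => ?_
    have hsucc := hD.succ i.castSucc
    rw [hD.nbhdIn_eq, Fin.succ_castSucc] at hsucc
    have hB' : B i.succ ⊆ _ := hsucc ▸ (hD.isMaxBottleneckIn i.succ).2.1
    have := (hD.isMaxBottleneckIn i.castSucc).alphaIn_le_alphaIn_sdiff hw
      (hD.isMaxBottleneckIn i.succ).1 hB'
    rwa [← hsucc, ← hD.ratio_eq_alphaIn, ← hD.ratio_eq_alphaIn] at this

lemma price_eq_of_adj_of_mem_B (hD : IsBottleneckDecomposition G w k B C Vs)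
    (hw : ∀ v, 0 < w v) (hp : IsBDPrice w B C p) (hu : u ∈ B i) (huv : G.Adj u v) :
    p v = w v := by
  obtain ⟨j, hj⟩ := hD.exists_mem_pair v
  rcases mem_union.mp hj with hvB | hvC
  · obtain rfl : j = i :=
      le_antisymm (hD.le_of_mem_B_of_adj hu hj huv)
        (hD.le_of_mem_B_of_adj hvB (mem_union_left _ hu) huv.symm)
    have huC : u ∈ C j := by
      rw [hD.nbhdIn_eq]
      exact mem_nbhdIn_of_adj hvB ((hD.isMaxBottleneckIn j).2.1 hu) huv.symm
    rw [hp.eq_of_mem_B j v hvB, hp.ratio_eq_one hw hu huC, one_mul]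
  · exact hp.eq_of_mem_C j v hvC

lemma ratio_mul_le_price_of_adj_of_mem_C (hD : IsBottleneckDecomposition G w k B C Vs)
    (hw : ∀ v, 0 < w v) (hp : IsBDPrice w B C p) (hu : u ∈ C i) (huv : G.Adj u v) :
    wsum w (C i) / wsum w (B i) * w v ≤ p v := by
  obtain ⟨j, hj⟩ := hD.exists_mem_pair v
  rcases mem_union.mp hj with hvB | hvC
  · rw [hp.eq_of_mem_B j v hvB]
    have hij := hD.le_of_mem_B_of_adj hvB (mem_union_right _ hu) huv.symm
    exact mul_le_mul_of_nonneg_right (hD.ratio_monotone hw hij) (hw v).le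
  · rw [hp.eq_of_mem_C j v hvC]
    exact mul_le_of_le_one_left (hw v).le (hD.ratio_le_one (fun v => (hw v).le) i)

lemma price_eq_ratio_mul_of_trade (hD : IsBottleneckDecomposition G w k B C Vs)
    (hx : IsBDAllocation G w k B C x) (hw : ∀ v, 0 < w v) (hp : IsBDPrice w B C p)
    (hu : u ∈ C i) (hvu : x v u ≠ 0) : p v = wsum w (C i) / wsum w (B i) * w v := by
  obtain ⟨j, ⟨hvB, huC⟩ | ⟨hvC, huB⟩⟩ := hx.2.1 v u hvu
  · obtain rfl := hD.eq_of_mem_pair (mem_union_right _ hu) (mem_union_right _ huC)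
    exact hp.eq_of_mem_B _ v hvB
  · obtain rfl := hD.eq_of_mem_pair (mem_union_right _ hu) (mem_union_left _ huB)
    rw [hp.eq_of_mem_C _ v hvC, hp.ratio_eq_one hw huB hu, one_mul]

lemma util_eq_of_mem_B (hD : IsBottleneckDecomposition G w k B C Vs)
    (hx : IsBDAllocation G w k B C x) (hw : ∀ v, 0 < w v) (hp : IsBDPrice w B C p)
    (hu : u ∈ B i) : util G w x u = wsum w (C i) / wsum w (B i) * w u := by
  rw [← hp.eq_of_mem_B i u hu, ← hx.sum_mul_price_eq hp u, util]
  refine sum_congr rfl fun v hv => ?_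
  rw [hD.price_eq_of_adj_of_mem_B hw hp hu ((G.mem_neighborFinset u v).mp hv)]

lemma util_eq_of_mem_C (hD : IsBottleneckDecomposition G w k B C Vs)
    (hx : IsBDAllocation G w k B C x) (hw : ∀ v, 0 < w v) (hp : IsBDPrice w B C p)
    (hu : u ∈ C i) : util G w x u = w u / (wsum w (C i) / wsum w (B i)) := by
  have hα : 0 < wsum w (C i) / wsum w (B i) :=
    div_pos (wsum_pos hw ⟨u, hu⟩) (wsum_pos hw (hD.isMaxBottleneckIn i).1)
  rw [← hp.eq_of_mem_C i u hu, ← hx.sum_mul_price_eq hp u, util, sum_div]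
  refine sum_congr rfl fun v _ => ?_
  by_cases hvu : x v u = 0
  · simp [hvu]
  · rw [hD.price_eq_ratio_mul_of_trade hx hw hp hu hvu, mul_left_comm,
      mul_div_cancel_left₀ _ hα.ne']

lemma sum_mul_weight_le_util (hD : IsBottleneckDecomposition G w k B C Vs)
    (hx : IsBDAllocation G w k B C x) (hw : ∀ v, 0 < w v) (hp : IsBDPrice w B C p)
    {y : V → ℝ} (hy : ∀ v, 0 ≤ y v) (hbudget : ∑ v ∈ G.neighborFinset u, y v * p v ≤ p u) :
    ∑ v ∈ G.neighborFinset u, y v * w v ≤ util G w x u := by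
  obtain ⟨i, hi⟩ := hD.exists_mem_pair u
  rcases mem_union.mp hi with hu | hu
  · rw [hD.util_eq_of_mem_B hx hw hp hu, ← hp.eq_of_mem_B i u hu, ← one_mul (p u)]
    refine sum_mul_le_mul_of_le_mul zero_le_one (fun v _ => hy v) (fun v hv => ?_) hbudget
    rw [one_mul, hD.price_eq_of_adj_of_mem_B hw hp hu ((G.mem_neighborFinset u v).mp hv)]
  · have hα : 0 < wsum w (C i) / wsum w (B i) :=
      div_pos (wsum_pos hw ⟨u, hu⟩) (wsum_pos hw (hD.isMaxBottleneckIn i).1)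
    rw [hD.util_eq_of_mem_C hx hw hp hu, ← hp.eq_of_mem_C i u hu, div_eq_inv_mul]
    refine sum_mul_le_mul_of_le_mul (inv_nonneg.mpr hα.le) (fun v _ => hy v) (fun v hv => ?_)
      hbudget
    exact (le_inv_mul_iff₀ hα).mpr
      (hD.ratio_mul_le_price_of_adj_of_mem_C hw hp hu ((G.mem_neighborFinset u v).mp hv))

end IsBottleneckDecomposition

end Market

theorem bd_mechanism_market_equilibrium_general {V : Type*} [Fintype V] [DecidableEq V]
    (G : SimpleGraph V) [DecidableRel G.Adj] (w : V → ℝ)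
    (hw : ∀ v, 0 < w v)
    (k : ℕ) (B C : Fin k → Finset V) (Vs : Fin (k + 1) → Finset V)
    (hV0 : Vs 0 = univ)
    (hVsucc : ∀ i : Fin k, Vs i.succ = Vs i.castSucc \ (B i ∪ C i))
    (hVlast : Vs (Fin.last k) = ∅)
    (hB : ∀ i : Fin k, IsMaxBottleneckIn G w (Vs i.castSucc) (B i))
    (hC : ∀ i : Fin k, C i = nbhdIn G (Vs i.castSucc) (B i))
    (p : V → ℝ)
    (hpB : ∀ i : Fin k, ∀ u ∈ B i, p u = (wsum w (C i) / wsum w (B i)) * w u)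
    (hpC : ∀ i : Fin k, ∀ u ∈ C i, p u = w u)
    (x : V → V → ℝ) (hx : IsBDAllocation G w k B C x) :
    (∀ u : V, ∑ v ∈ G.neighborFinset u, x u v = 1) ∧
    (∀ u : V, ∑ v ∈ G.neighborFinset u, x v u * p v ≤ p u) ∧
    (∀ u : V, ∀ y : V → ℝ, (∀ v, 0 ≤ y v) →
      (∑ v ∈ G.neighborFinset u, y v * p v) ≤ p u →
      (∑ v ∈ G.neighborFinset u, y v * w v) ≤ util G w x u) ∧
    (∀ i : Fin k, ∀ u ∈ B i, util G w x u = (wsum w (C i) / wsum w (B i)) * w u) ∧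
    (∀ i : Fin k, ∀ u ∈ C i, util G w x u = w u / (wsum w (C i) / wsum w (B i))) := by
  have hD : IsBottleneckDecomposition G w k B C Vs := ⟨hV0, hVsucc, hVlast, hB, hC⟩
  have hp : IsBDPrice w B C p := ⟨hpB, hpC⟩
  exact ⟨hx.1.2.2, fun u => (hx.sum_mul_price_eq hp u).le,
    fun u _ hy hbudget => hD.sum_mul_weight_le_util hx hw hp hy hbudget,
    fun i u hu => hD.util_eq_of_mem_B hx hw hp hu,
    fun i u hu => hD.util_eq_of_mem_C hx hw hp hu⟩

/-- with prices `p(u) = α_i·w(u)` for `u ∈ B_i` and `p(u) = w(u)` for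
`u ∈ C_i`, every BD-mechanism allocation `X` satisfies market clearance, the budget
constraints, and individual optimality — so `(p, X)` is a market equilibrium — and
`U_u(X) = α_i·w(u)` for `u ∈ B_i`, `U_u(X) = w(u)/α_i` for `u ∈ C_i`. -/
theorem bd_mechanism_market_equilibrium {V : Type*} [Fintype V] [DecidableEq V]
    (G : SimpleGraph V) [DecidableRel G.Adj] (w : V → ℝ)
    (hw : ∀ v, 0 < w v) (hconn : G.Connected) (hcard : 2 ≤ Fintype.card V)
    (k : ℕ) (B C : Fin k → Finset V) (Vs : Fin (k + 1) → Finset V)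
    (hV0 : Vs 0 = univ)
    (hVsucc : ∀ i : Fin k, Vs i.succ = Vs i.castSucc \ (B i ∪ C i))
    (hVlast : Vs (Fin.last k) = ∅)
    (hB : ∀ i : Fin k, IsMaxBottleneckIn G w (Vs i.castSucc) (B i))
    (hC : ∀ i : Fin k, C i = nbhdIn G (Vs i.castSucc) (B i))
    (p : V → ℝ)
    (hpB : ∀ i : Fin k, ∀ u ∈ B i, p u = (wsum w (C i) / wsum w (B i)) * w u)
    (hpC : ∀ i : Fin k, ∀ u ∈ C i, p u = w u)
    (x : V → V → ℝ) (hx : IsBDAllocation G w k B C x) :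
    (∀ u : V, ∑ v ∈ G.neighborFinset u, x u v = 1) ∧
    (∀ u : V, ∑ v ∈ G.neighborFinset u, x v u * p v ≤ p u) ∧
    (∀ u : V, ∀ y : V → ℝ, (∀ v, 0 ≤ y v) →
      (∑ v ∈ G.neighborFinset u, y v * p v) ≤ p u →
      (∑ v ∈ G.neighborFinset u, y v * w v) ≤ util G w x u) ∧
    (∀ i : Fin k, ∀ u ∈ B i, util G w x u = (wsum w (C i) / wsum w (B i)) * w u) ∧
    (∀ i : Fin k, ∀ u ∈ C i, util G w x u = w u / (wsum w (C i) / wsum w (B i))) :=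
  bd_mechanism_market_equilibrium_general G w hw k B C Vs hV0 hVsucc hVlast hB hC p hpB hpC x hx
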